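/- The function ζ₀ : [0,1] → ℝ defined by ζ₀(τ) = (2/√(1+τ²))·(π/2 − arctan(√(1−τ²)/√(1+τ²))) is injective on [0,1]; indeed it is strictly increasing on [0,1], with ζ₀(0) = π/2 and ζ₀(1) = π/√2. -/

import Mathlib

open Real Set

/-- The function `ζ₀(τ)` of the paper. -/
noncomputable def zeta0 (τ : ℝ) : ℝ :=
  2 / Real.sqrt (1 + τ^2) *
    (π/2 - Real.arctan (Real.sqrt (1 - τ^2) / Real.sqrt (1 + τ^2)))

/-! With `u = √((1 + τ²)/2)` the arctangent in `ζ₀` is `arccos u`, so `ζ₀(τ) = √2 · arcsin u / u`.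
Since `u` increases with `τ`, it suffices that `arcsin u / u` increases on `(0, 1]`; substituting
`u = sin θ`, this is the decrease of `sin θ / θ` on `(0, π/2]`, the slope of a chord of the concave
function `sin` from the origin. -/

lemma strictAntiOn_sin_div_self : StrictAntiOn (fun x => sin x / x) (Ioc 0 π) := by
  intro x hx y hy hxy
  have h := strictConcaveOn_sin_Icc.secant_strict_mono (a := 0) ⟨le_rfl, pi_pos.le⟩
    (Ioc_subset_Icc_self hx) (Ioc_subset_Icc_self hy) hx.1.ne' hy.1.ne' hxy
  simpa only [sin_zero, sub_zero] using h

lemma strictMonoOn_arcsin_div_self : StrictMonoOn (fun x => arcsin x / x) (Ioc 0 1) := by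
  intro x hx y hy hxy
  have hθ : arcsin x < arcsin y :=
    strictMonoOn_arcsin ⟨by linarith [hx.1], hx.2⟩ ⟨by linarith [hy.1], hy.2⟩ hxy
  have hmem {z : ℝ} (hz : z ∈ Ioc (0 : ℝ) 1) : arcsin z ∈ Ioc 0 π :=
    ⟨arcsin_pos.2 hz.1, (arcsin_le_pi_div_two z).trans (by linarith [pi_pos])⟩
  have h := strictAntiOn_sin_div_self (hmem hx) (hmem hy) hθ
  simp only [sin_arcsin (by linarith [hx.1]) hx.2, sin_arcsin (by linarith [hy.1]) hy.2] at h
  simpa only [inv_div] using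
    (inv_lt_inv₀ (div_pos hx.1 (hmem hx).1) (div_pos hy.1 (hmem hy).1)).2 h

lemma pi_div_two_sub_arctan_sqrt_one_sub_sq_div {x : ℝ} (hx : 0 < x) :
    π / 2 - arctan (√(1 - x ^ 2) / x) = arcsin x := by
  rw [← arccos_eq_arctan hx, arcsin_eq_pi_div_two_sub_arccos]

lemma zeta0_eq_sqrt_two_mul_arcsin_div (τ : ℝ) :
    zeta0 τ = √2 * (arcsin √((1 + τ ^ 2) / 2) / √((1 + τ ^ 2) / 2)) := by
  have hu : √((1 + τ ^ 2) / 2) = √(1 + τ ^ 2) / √2 := sqrt_div' _ (by norm_num)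
  have hu_pos : 0 < √((1 + τ ^ 2) / 2) := sqrt_pos.2 (by positivity)
  have harg : √(1 - τ ^ 2) / √(1 + τ ^ 2) =
      √(1 - √((1 + τ ^ 2) / 2) ^ 2) / √((1 + τ ^ 2) / 2) := by
    rw [sq_sqrt (by positivity), show 1 - (1 + τ ^ 2) / 2 = (1 - τ ^ 2) / 2 by ring,
      sqrt_div' _ (by norm_num), hu, div_div_div_cancel_right₀ (by positivity)]
  rw [zeta0, harg, pi_div_two_sub_arctan_sqrt_one_sub_sq_div hu_pos, hu]
  have hs2 : √2 * √2 = 2 := mul_self_sqrt (by norm_num)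
  field_simp
  linear_combination -arcsin (√(1 + τ ^ 2) / √2) * hs2

theorem zeta0_strictMono_injective :
    StrictMonoOn zeta0 (Set.Icc (0:ℝ) 1) ∧
      Set.InjOn zeta0 (Set.Icc (0:ℝ) 1) ∧
      zeta0 0 = π / 2 ∧ zeta0 1 = π / Real.sqrt 2 := by
  have hmono : StrictMonoOn zeta0 (Icc 0 1) := by
    intro a ha b hb hab
    have hmem {τ : ℝ} (hτ : τ ∈ Icc (0 : ℝ) 1) : √((1 + τ ^ 2) / 2) ∈ Ioc 0 1 :=
      ⟨sqrt_pos.2 (by positivity), sqrt_le_one.2 (by nlinarith [hτ.1, hτ.2])⟩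
    have hu : √((1 + a ^ 2) / 2) < √((1 + b ^ 2) / 2) :=
      sqrt_lt_sqrt (by positivity) (by nlinarith [ha.1])
    rw [zeta0_eq_sqrt_two_mul_arcsin_div, zeta0_eq_sqrt_two_mul_arcsin_div]
    exact mul_lt_mul_of_pos_left (strictMonoOn_arcsin_div_self (hmem ha) (hmem hb) hu)
      (by positivity)
  refine ⟨hmono, hmono.injOn, ?_, ?_⟩
  · norm_num [zeta0, arctan_one]
    ring
  · have hs2 : √2 * √2 = 2 := mul_self_sqrt (by norm_num)
    norm_num [zeta0, arctan_zero]
    rw [eq_div_iff (by positivity)]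
    linear_combination (π / 2) * hs2
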